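/- Let S be an Arf numerical semigroup with multiplicity 5 and conductor s > 5 with s ≡ 3 (mod 5). Then S = ⟨5, s, s+1, s+3, s+4⟩, PF(S) = {s−5, s−4, s−2, s−1}, and the unique RF-matrix of the pseudo-Frobenius number s−5 is the 5×5 matrix with rows (−1, 1, 0, 0, 0), ((s−8)/5, −1, 0, 1, 0), ((s−8)/5, 0, −1, 0, 1), ((s−3)/5, 0, 1, −1, 0), ((2s−1)/5, 0, 0, 0, −1). -/

import Mathlib

/-- `S ⊆ ℕ` is a numerical semigroup: contains `0`, closed under addition,
and has finite complement in `ℕ`. -/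
def IsNumericalSemigroup (S : Set ℕ) : Prop :=
  0 ∈ S ∧ (∀ a ∈ S, ∀ b ∈ S, a + b ∈ S) ∧ (Sᶜ).Finite

/-- `S` satisfies the Arf condition: for `x ≤ y` in `S`, `2y - x ∈ S`. -/
def IsArf (S : Set ℕ) : Prop :=
  ∀ x ∈ S, ∀ y ∈ S, x ≤ y → 2 * y - x ∈ S

/-- `m` is the multiplicity of `S`: the smallest nonzero element. -/
def HasMultiplicity (S : Set ℕ) (m : ℕ) : Prop :=
  m ∈ S ∧ m ≠ 0 ∧ ∀ n ∈ S, n ≠ 0 → m ≤ n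

/-- `s` is the conductor of `S`: the least `t` with `[t, ∞) ⊆ S`. -/
def HasConductor (S : Set ℕ) (s : ℕ) : Prop :=
  (∀ n, s ≤ n → n ∈ S) ∧ ∀ t, (∀ n, t ≤ n → n ∈ S) → s ≤ t

/-- The set of pseudo-Frobenius numbers of `S`. -/
def pseudoFrobeniusSet (S : Set ℕ) : Set ℕ :=
  {z | z ∉ S ∧ ∀ n ∈ S, n ≠ 0 → z + n ∈ S}

/-- `A` is a row-factorization (RF-) matrix of `f` with respect to generators `n`:
diagonal entries are `-1`, off-diagonal entries are nonnegative, and every row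
gives a representation of `f` in terms of the generators. -/
def IsRFMatrix {e : ℕ} (n : Fin e → ℕ) (f : ℤ) (A : Matrix (Fin e) (Fin e) ℤ) : Prop :=
  (∀ i, A i i = -1) ∧ (∀ i j, i ≠ j → 0 ≤ A i j) ∧
    (∀ i, f = ∑ j, A i j * (n j : ℤ))

/-!
Below the conductor `s`, the semigroup contains only multiples of `5`. An element `y < s` with
`y ≡ 2 (mod 5)` is impossible, since adding a multiple of `5` would put `s - 1 ∈ S`. The Arf
condition turns `x - d, x ∈ S` into `x + d ∈ S`; taking one of `x - d`, `x` to be a multiple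
of `5` moves the residues `1`, `3`, `4` to `2` or `1` while staying below `s`. Hence
`S = 5ℕ ∪ [s, ∞)`, and the generators and pseudo-Frobenius numbers are read off. In a row of an
RF-matrix of `s - 5` the generators other than `nᵢ` represent `s - 5 + nᵢ < 2s`, so at most one
generator `≥ s` occurs, and the residue mod `5` decides which.
-/

theorem IsNumericalSemigroup.mem_of_dvd {S : Set ℕ} {m x : ℕ} (hS : IsNumericalSemigroup S)
    (hm : m ∈ S) (hx : m ∣ x) : x ∈ S := by
  obtain ⟨k, rfl⟩ := hx
  induction k with
  | zero => exact hS.1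
  | succ k ih => exact hS.2.1 _ ih _ hm

theorem HasConductor.sub_one_notMem {S : Set ℕ} {s : ℕ} (h : HasConductor S s) (hs : 0 < s) :
    s - 1 ∉ S := by
  intro hmem
  have : s ≤ s - 1 := h.2 (s - 1) fun n hn ↦ by
    rcases hn.eq_or_lt with rfl | hlt
    · exact hmem
    · exact h.1 n (by omega)
  omega

theorem IsArf.add_mem_of_sub_mem {S : Set ℕ} {x d : ℕ} (h : IsArf S) (hd : d ≤ x) (hx : x ∈ S)
    (hsub : x - d ∈ S) : x + d ∈ S := by
  simpa [show 2 * x - (x - d) = x + d by omega] using h _ hsub _ hx (Nat.sub_le x d)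

theorem IsArf.mem_iff_five_dvd_or_le {S : Set ℕ} {s : ℕ} (hS : IsNumericalSemigroup S)
    (hArf : IsArf S) (h5 : 5 ∈ S) (hcon : HasConductor S s) (hmod : s % 5 = 3) (x : ℕ) :
    x ∈ S ↔ 5 ∣ x ∨ s ≤ x := by
  have mem_of_dvd : ∀ y, 5 ∣ y → y ∈ S := fun y ↦ hS.mem_of_dvd h5
  have mod_ne_two : ∀ y ∈ S, y < s → y % 5 ≠ 2 := fun y hy hys hr ↦
    hcon.sub_one_notMem (by omega) <| by
      simpa [show y + (s - 1 - y) = s - 1 by omega] using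
        hS.2.1 _ hy _ (mem_of_dvd (s - 1 - y) (by omega))
  have mod_ne_one : ∀ y ∈ S, y < s → y % 5 ≠ 1 := fun y hy hys hr ↦
    mod_ne_two (y + 1) (hArf.add_mem_of_sub_mem (by omega) hy (mem_of_dvd _ (by omega)))
      (by omega) (by omega)
  have mod_ne_three : ∀ y ∈ S, y < s → y % 5 ≠ 3 := fun y hy hys hr ↦
    mod_ne_one (y + 3) (hArf.add_mem_of_sub_mem (by omega) hy (mem_of_dvd _ (by omega)))
      (by omega) (by omega)
  have mod_ne_four : ∀ y ∈ S, y < s → y % 5 ≠ 4 := fun y hy hys hr ↦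
    mod_ne_one (y + 2) (hArf.add_mem_of_sub_mem (x := y + 1) (d := 1) (by omega)
      (mem_of_dvd _ (by omega)) (by simpa using hy)) (by omega) (by omega)
  refine ⟨fun hx ↦ ?_, fun hx ↦ hx.elim (mem_of_dvd x) (hcon.1 x)⟩
  by_contra! hx'
  have := mod_ne_one x hx; have := mod_ne_two x hx; have := mod_ne_three x hx
  have := mod_ne_four x hx
  omega

theorem AddSubmonoid.mem_closure_iff_dvd_or_le {m c : ℕ} {A : Set ℕ} (hm : 0 < m) (hmA : m ∈ A)
    (hA : ∀ a ∈ A, m ∣ a ∨ c ≤ a) (hgen : ∀ x, c ≤ x → x < c + m → x ∈ A ∨ m ∣ x) (x : ℕ) :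
    x ∈ closure A ↔ m ∣ x ∨ c ≤ x := by
  have dvd_mem : ∀ y, m ∣ y → y ∈ closure A := by
    rintro _ ⟨k, rfl⟩
    simpa [mul_comm] using nsmul_mem (subset_closure hmA) k
  constructor
  · intro hx
    induction hx using closure_induction with
    | mem a ha => exact hA a ha
    | zero => exact .inl (dvd_zero m)
    | add a b _ _ iha ihb =>
      rcases iha with ha | ha
      · exact ihb.imp (dvd_add ha) le_add_left
      · exact .inr (le_add_right ha)
  · rintro (hx | hx)
    · exact dvd_mem x hx
    · have hx' : x = (c + (x - c) % m) + m * ((x - c) / m) := by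
        have := Nat.mod_add_div (x - c) m; omega
      rw [hx']
      refine add_mem ?_ (dvd_mem _ (dvd_mul_right _ _))
      rcases hgen (c + (x - c) % m) (by omega) (by have := Nat.mod_lt (x - c) hm; omega) with h | h
      exacts [subset_closure h, dvd_mem _ h]

theorem pseudoFrobeniusSet_setOf_dvd_or_le {m c : ℕ} (hm : 0 < m) (hmc : m ≤ c) :
    pseudoFrobeniusSet {x | m ∣ x ∨ c ≤ x} = {z | c - m ≤ z ∧ z < c ∧ ¬m ∣ z} := by
  ext z
  simp only [pseudoFrobeniusSet, Set.mem_ofPred_eq]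
  constructor
  · rintro ⟨hz, hadd⟩
    obtain ⟨hzd, hzc⟩ := not_or.mp hz
    have hzm : ¬m ∣ z + m := by rwa [Nat.dvd_add_self_right]
    have := (hadd m (.inl dvd_rfl) hm.ne').resolve_left hzm
    exact ⟨by omega, by omega, hzd⟩
  · rintro ⟨hlow, hlt, hndvd⟩
    refine ⟨by omega, fun n hn hn0 ↦ .inr ?_⟩
    have : m ≤ n := hn.elim (Nat.le_of_dvd (Nat.pos_of_ne_zero hn0)) hmc.trans
    omega

def rfMatrixOfConductorSubFive (s : ℕ) : Matrix (Fin 5) (Fin 5) ℤ :=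
  !![-1, 1, 0, 0, 0;
     ((s : ℤ) - 8) / 5, -1, 0, 1, 0;
     ((s : ℤ) - 8) / 5, 0, -1, 0, 1;
     ((s : ℤ) - 3) / 5, 0, 1, -1, 0;
     (2 * (s : ℤ) - 1) / 5, 0, 0, 0, -1]

theorem sum_large_coeffs_le_one_of_lt_two_mul {s : ℕ} (hs : 0 < s) (c : Fin 5 → ℤ)
    (hc : ∀ j, 0 ≤ c j) (hlt : ∑ j, c j * (![5, s, s + 1, s + 3, s + 4] j : ℤ) < 2 * s) :
    c 1 + c 2 + c 3 + c 4 ≤ 1 := by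
  have hsplit : ∑ j, c j * (![5, s, s + 1, s + 3, s + 4] j : ℤ) =
      s * (c 1 + c 2 + c 3 + c 4) + (5 * c 0 + c 2 + 3 * c 3 + 4 * c 4) := by
    rw [Fin.sum_univ_five]; simp; ring
  have := hc 0; have := hc 2; have := hc 3; have := hc 4
  have : (s : ℤ) * (c 1 + c 2 + c 3 + c 4) < s * 2 := by linarith
  exact Int.lt_add_one_iff.mp (lt_of_mul_lt_mul_left this (by positivity))

theorem row_eq_rfMatrixOfConductorSubFive {s : ℕ} (hs : 5 < s) (hmod : s % 5 = 3) (i : Fin 5)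
    (r : Fin 5 → ℤ) (hdiag : r i = -1) (hoff : ∀ j, i ≠ j → 0 ≤ r j)
    (hrow : (s : ℤ) - 5 = ∑ j, r j * (![5, s, s + 1, s + 3, s + 4] j : ℤ)) :
    r = rfMatrixOfConductorSubFive s i := by
  set c := r + Pi.single i 1
  have hc : ∀ j, 0 ≤ c j := fun j ↦ by
    rcases eq_or_ne i j with rfl | hij
    · simp [c, hdiag]
    · simp [c, hij.symm, hoff j hij]
  have hsum : ∑ j, c j * (![5, s, s + 1, s + 3, s + 4] j : ℤ) < 2 * s := by
    simp only [c, Pi.add_apply, add_mul, Finset.sum_add_distrib, ← hrow, Pi.single_apply,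
      ite_mul, one_mul, zero_mul, Finset.sum_ite_eq', Finset.mem_univ, if_true]
    fin_cases i <;> simp <;> omega
  have hK := sum_large_coeffs_le_one_of_lt_two_mul (by omega) c hc hsum
  have hcases : (c 1 = 0 ∧ c 2 = 0 ∧ c 3 = 0 ∧ c 4 = 0) ∨ (c 1 = 1 ∧ c 2 = 0 ∧ c 3 = 0 ∧ c 4 = 0) ∨
      (c 1 = 0 ∧ c 2 = 1 ∧ c 3 = 0 ∧ c 4 = 0) ∨ (c 1 = 0 ∧ c 2 = 0 ∧ c 3 = 1 ∧ c 4 = 0) ∨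
      (c 1 = 0 ∧ c 2 = 0 ∧ c 3 = 0 ∧ c 4 = 1) := by
    have := hc 1; have := hc 2; have := hc 3; have := hc 4; omega
  -- With the large generators fixed, the row equation is linear and its residue mod `5` leaves
  -- one case.
  simp only [Fin.sum_univ_five] at hrow
  fin_cases i <;> simp [c] at hcases hdiag <;>
    rcases hcases with ⟨h1, h2, h3, h4⟩ | ⟨h1, h2, h3, h4⟩ | ⟨h1, h2, h3, h4⟩ | ⟨h1, h2, h3, h4⟩ |
      ⟨h1, h2, h3, h4⟩ <;> simp [h1, h2, h3, h4, hdiag] at hrow <;> funext j <;> fin_cases j <;>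
    simp [rfMatrixOfConductorSubFive, h1, h2, h3, h4, hdiag] <;> omega

theorem isRFMatrix_iff_eq_rfMatrixOfConductorSubFive {s : ℕ} (hs : 5 < s) (hmod : s % 5 = 3)
    (A : Matrix (Fin 5) (Fin 5) ℤ) :
    IsRFMatrix ![5, s, s + 1, s + 3, s + 4] ((s : ℤ) - 5) A ↔
      A = rfMatrixOfConductorSubFive s := by
  constructor
  · rintro ⟨hdiag, hoff, hrow⟩
    funext i
    exact row_eq_rfMatrixOfConductorSubFive hs hmod i (A i) (hdiag i) (hoff i) (hrow i)
  · rintro rfl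
    refine ⟨fun i ↦ ?_, fun i j hij ↦ ?_, fun i ↦ ?_⟩
    · fin_cases i <;> rfl
    · fin_cases i <;> fin_cases j <;> simp [rfMatrixOfConductorSubFive] at hij ⊢ <;> omega
    · fin_cases i <;> simp [rfMatrixOfConductorSubFive, Fin.sum_univ_five] <;> omega

/-- Arf numerical semigroup with multiplicity `5`, conductor `s > 5`,
`s ≡ 3 (mod 5)`: `S = ⟨5, s, s+1, s+3, s+4⟩`, `PF(S) = {s-5, s-4, s-2, s-1}`, and the
unique RF-matrix of `s-5` is as displayed. -/
theorem arf_mult_five_mod_three (S : Set ℕ) (s : ℕ)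
    (hNS : IsNumericalSemigroup S) (hArf : IsArf S)
    (hmul : HasMultiplicity S 5) (hcon : HasConductor S s)
    (hs : 5 < s) (hmod : s % 5 = 3) :
    S = (AddSubmonoid.closure ({5, s, s + 1, s + 3, s + 4} : Set ℕ) : Set ℕ) ∧
    pseudoFrobeniusSet S = {s - 5, s - 4, s - 2, s - 1} ∧
    (∀ A : Matrix (Fin 5) (Fin 5) ℤ,
      IsRFMatrix ![5, s, s + 1, s + 3, s + 4] ((s : ℤ) - 5) A ↔
        A = !![-1, 1, 0, 0, 0;
               ((s : ℤ) - 8) / 5, -1, 0, 1, 0;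
               ((s : ℤ) - 8) / 5, 0, -1, 0, 1;
               ((s : ℤ) - 3) / 5, 0, 1, -1, 0;
               (2 * (s : ℤ) - 1) / 5, 0, 0, 0, -1]) := by
  have hS : S = {x | 5 ∣ x ∨ s ≤ x} :=
    Set.ext (hArf.mem_iff_five_dvd_or_le hNS hmul.1 hcon hmod)
  refine ⟨?_, ?_, isRFMatrix_iff_eq_rfMatrixOfConductorSubFive hs hmod⟩
  · ext x
    rw [hS, SetLike.mem_coe, AddSubmonoid.mem_closure_iff_dvd_or_le (m := 5) (c := s) (by norm_num)
      (by simp) (by simp) (fun y _ _ ↦ by simp; omega)]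
    rfl
  · rw [hS, pseudoFrobeniusSet_setOf_dvd_or_le (by norm_num) hs.le]
    ext z
    simp only [Set.mem_ofPred_eq, Set.mem_insert_iff, Set.mem_singleton_iff]
    omega
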